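/- arXiv:2506.03109 — 2 statements merged into one kernel-verified Lean document; each statement's English description precedes it below -/
import Mathlib

section
/- Let X be a measurable space with probability measure μ, let Θ be a measurable space with probability measure ν, and let Ĝ : Θ × X → (probability vectors on Fin k) and G_w, G_star : X → (probability vectors on Fin k) be measurable. Let f : ℝ → ℝ be convex, differentiable on (0,∞), with f(1) = 0. Suppose there is L ≥ 0 such that for every θ ∈ Θ, x ∈ X, and index i, |f'(t)| ≤ L for all t in the closed interval with endpoints (Ĝ θ x) i / (G_star x) i and (G_w x) i / (G_star x) i; there is C ≥ 0 such that TV(Ĝ θ x, G_w x) ≤ C * Real.sqrt (D_f(Ĝ θ x ‖ G_w x)) for all θ, x; and all relevant maps θ ↦ R_f(Ĝ θ, G_star), θ ↦ R_f(Ĝ θ, G_w) are defined and ν-integrable. Then |∫ (R_f(Ĝ θ, G_star) − R_f(G_w, G_star)) ∂ν(θ)| ≤ 2 * L * C * Real.sqrt (∫ R_f(Ĝ θ, G_w) ∂ν(θ)). -/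
open scoped BigOperators
open MeasureTheory

/-- `p` is a probability vector on `Fin k`: all coordinates positive, summing to one. -/
def IsProbVec {k : ℕ} (p : Fin k → ℝ) : Prop :=
  (∀ i, 0 < p i) ∧ ∑ i, p i = 1

/-- Discrete `f`-divergence `D_f(p‖q) = ∑ i, q i * f (p i / q i)`. -/
noncomputable def fDiv {k : ℕ} (f : ℝ → ℝ) (p q : Fin k → ℝ) : ℝ :=
  ∑ i, q i * f (p i / q i)

/-- Total variation distance `TV(p,q) = (1/2) ∑ i, |p i − q i|`. -/
noncomputable def tvDist {k : ℕ} (p q : Fin k → ℝ) : ℝ :=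
  (1 / 2) * ∑ i, |p i - q i|

/-- Population disagreement `R_f(g,h) = ∫ D_f(g x ‖ h x) ∂μ`. -/
noncomputable def popDis {k : ℕ} {X : Type*} [MeasurableSpace X] (μ : Measure X)
    (f : ℝ → ℝ) (g h : X → Fin k → ℝ) : ℝ :=
  ∫ x, fDiv f (g x) (h x) ∂μ

/-!
Pointwise, the mean value theorem for `f` between `Ĝ θ x i / G⋆ x i` and `G_w x i / G⋆ x i`
gives `|D_f(Ĝ θ x ‖ G⋆ x) - D_f(G_w x ‖ G⋆ x)| ≤ 2 L · TV(Ĝ θ x, G_w x)`,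
and the total-variation hypothesis turns this into `2 L C √(D_f(Ĝ θ x ‖ G_w x))`. Integrating
such a bound first over `μ` and then over `ν`, Jensen's inequality for the concave `√` moves the
square root outside each integral.
-/

open Set

section SqrtIntegral

variable {α : Type*} [MeasurableSpace α] {μ : Measure α} {g : α → ℝ}

theorem MeasureTheory.Integrable.sqrt [IsFiniteMeasure μ] (hg : Integrable g μ)
    (hg0 : ∀ᵐ x ∂μ, 0 ≤ g x) : Integrable (fun x => √(g x)) μ := by
  have hmeas : AEStronglyMeasurable (fun x => √(g x)) μ :=
    Real.continuous_sqrt.comp_aestronglyMeasurable hg.aestronglyMeasurable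
  refine ((memLp_two_iff_integrable_sq hmeas).2 (hg.congr ?_)).integrable one_le_two
  filter_upwards [hg0] with x hx using (Real.sq_sqrt hx).symm

theorem integral_sqrt_le_sqrt_integral [IsProbabilityMeasure μ] (hg : Integrable g μ)
    (hg0 : ∀ᵐ x ∂μ, 0 ≤ g x) : ∫ x, √(g x) ∂μ ≤ √(∫ x, g x ∂μ) :=
  Real.strictConcaveOn_sqrt.concaveOn.le_map_integral Real.continuous_sqrt.continuousOn
    isClosed_Ici hg0 hg (hg.sqrt hg0)

theorem abs_integral_le_mul_sqrt_integral [IsProbabilityMeasure μ] {w : α → ℝ} {K : ℝ}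
    (hK : 0 ≤ K) (hg : Integrable g μ) (hg0 : ∀ᵐ x ∂μ, 0 ≤ g x)
    (hw : ∀ᵐ x ∂μ, |w x| ≤ K * √(g x)) : |∫ x, w x ∂μ| ≤ K * √(∫ x, g x ∂μ) :=
  calc |∫ x, w x ∂μ| ≤ ∫ x, K * √(g x) ∂μ :=
        norm_integral_le_of_norm_le (f := w) ((hg.sqrt hg0).const_mul K) hw
    _ = K * ∫ x, √(g x) ∂μ := integral_const_mul K _
    _ ≤ K * √(∫ x, g x ∂μ) := by gcongr; exact integral_sqrt_le_sqrt_integral hg hg0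

end SqrtIntegral

theorem fDiv_nonneg {k : ℕ} {f : ℝ → ℝ} (hconv : ConvexOn ℝ univ f) (hf1 : f 1 = 0)
    {p q : Fin k → ℝ} (hp : ∑ i, p i = 1) (hq : IsProbVec q) : 0 ≤ fDiv f p q := by
  have hmean : ∑ i, q i • (p i / q i) = 1 := by
    rw [← hp]
    exact Finset.sum_congr rfl fun i _ => mul_div_cancel₀ _ (hq.1 i).ne'
  have := hconv.map_sum_le (fun i _ => (hq.1 i).le) hq.2 (fun i _ => mem_univ (p i / q i))
  rwa [hmean, hf1] at this

section MeanValue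

variable {f : ℝ → ℝ} {L : ℝ}

theorem abs_mul_sub_le_of_abs_deriv_le (hf : DifferentiableOn ℝ f (Ioi 0)) {a b q : ℝ}
    (ha : 0 < a) (hb : 0 < b) (hq : 0 < q)
    (hL : ∀ t ∈ uIcc (a / q) (b / q), |deriv f t| ≤ L) :
    |q * (f (a / q) - f (b / q))| ≤ L * |a - b| := by
  have hpos : uIcc (a / q) (b / q) ⊆ Ioi 0 :=
    (ordConnected_Ioi.uIcc_subset (div_pos ha hq) (div_pos hb hq) :)
  have hmvt : ‖f (a / q) - f (b / q)‖ ≤ L * ‖a / q - b / q‖ :=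
    (convex_uIcc _ _).norm_image_sub_le_of_norm_deriv_le
      (fun t ht => hf.differentiableAt (isOpen_Ioi.mem_nhds (hpos ht))) hL
      right_mem_uIcc left_mem_uIcc
  rw [Real.norm_eq_abs, Real.norm_eq_abs, div_sub_div_same, abs_div, abs_of_pos hq] at hmvt
  rw [abs_mul, abs_of_pos hq]
  calc q * |f (a / q) - f (b / q)| ≤ q * (L * (|a - b| / q)) := by gcongr
    _ = L * |a - b| := by field_simp

theorem abs_fDiv_sub_fDiv_le {k : ℕ} (hf : DifferentiableOn ℝ f (Ioi 0)) {p r q : Fin k → ℝ}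
    (hp : ∀ i, 0 < p i) (hr : ∀ i, 0 < r i) (hq : ∀ i, 0 < q i)
    (hL : ∀ i, ∀ t ∈ uIcc (p i / q i) (r i / q i), |deriv f t| ≤ L) :
    |fDiv f p q - fDiv f r q| ≤ 2 * L * tvDist p r :=
  calc |fDiv f p q - fDiv f r q| = |∑ i, q i * (f (p i / q i) - f (r i / q i))| := by
        simp only [fDiv, mul_sub, Finset.sum_sub_distrib]
    _ ≤ ∑ i, |q i * (f (p i / q i) - f (r i / q i))| := Finset.abs_sum_le_sum_abs _ _
    _ ≤ ∑ i, L * |p i - r i| := Finset.sum_le_sum fun i _ =>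
        abs_mul_sub_le_of_abs_deriv_le hf (hp i) (hr i) (hq i) (hL i)
    _ = 2 * L * tvDist p r := by rw [tvDist, ← Finset.mul_sum]; ring

end MeanValue

theorem stmt8_general {k : ℕ} {X Θ : Type*} [MeasurableSpace X] [MeasurableSpace Θ]
    (μ : Measure X) [IsProbabilityMeasure μ]
    (ν : Measure Θ) [IsProbabilityMeasure ν]
    (Ghat : Θ → X → Fin k → ℝ) (Gw Gstar : X → Fin k → ℝ)
    (hGhatP : ∀ θ x, IsProbVec (Ghat θ x)) (hGwP : ∀ x, IsProbVec (Gw x))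
    (hGstarP : ∀ x, IsProbVec (Gstar x))
    (f : ℝ → ℝ) (hconv : ConvexOn ℝ Set.univ f)
    (hdiff : DifferentiableOn ℝ f (Set.Ioi (0 : ℝ))) (hf1 : f 1 = 0)
    (L : ℝ) (hL : 0 ≤ L)
    (hL' : ∀ (θ : Θ) (x : X) (i : Fin k) (t : ℝ),
      t ∈ Set.uIcc (Ghat θ x i / Gstar x i) (Gw x i / Gstar x i) → |deriv f t| ≤ L)
    (C : ℝ) (hC : 0 ≤ C)
    (hTV : ∀ θ x, tvDist (Ghat θ x) (Gw x) ≤ C * Real.sqrt (fDiv f (Ghat θ x) (Gw x)))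
    (hint1 : ∀ θ, Integrable (fun x => fDiv f (Ghat θ x) (Gstar x)) μ)
    (hint2 : Integrable (fun x => fDiv f (Gw x) (Gstar x)) μ)
    (hint3 : ∀ θ, Integrable (fun x => fDiv f (Ghat θ x) (Gw x)) μ)
    (hint5 : Integrable (fun θ => popDis μ f (Ghat θ) Gw) ν) :
    |∫ θ, (popDis μ f (Ghat θ) Gstar - popDis μ f Gw Gstar) ∂ν| ≤
      2 * L * C * Real.sqrt (∫ θ, popDis μ f (Ghat θ) Gw ∂ν) := by
  have hD0 θ x : 0 ≤ fDiv f (Ghat θ x) (Gw x) := fDiv_nonneg hconv hf1 (hGhatP θ x).2 (hGwP x)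
  have hK : 0 ≤ 2 * L * C := by positivity
  have hpoint θ x : |fDiv f (Ghat θ x) (Gstar x) - fDiv f (Gw x) (Gstar x)| ≤
      2 * L * C * √(fDiv f (Ghat θ x) (Gw x)) :=
    calc _ ≤ 2 * L * tvDist (Ghat θ x) (Gw x) :=
          abs_fDiv_sub_fDiv_le hdiff (hGhatP θ x).1 (hGwP x).1 (hGstarP x).1 (hL' θ x)
      _ ≤ 2 * L * (C * √(fDiv f (Ghat θ x) (Gw x))) := by gcongr; exact hTV θ x
      _ = _ := by ring
  have hθ θ : |popDis μ f (Ghat θ) Gstar - popDis μ f Gw Gstar| ≤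
      2 * L * C * √(popDis μ f (Ghat θ) Gw) := by
    rw [popDis, popDis, ← integral_sub (hint1 θ) hint2]
    exact abs_integral_le_mul_sqrt_integral hK (hint3 θ) (.of_forall (hD0 θ))
      (.of_forall (hpoint θ))
  exact abs_integral_le_mul_sqrt_integral hK hint5
    (.of_forall fun θ => integral_nonneg (hD0 θ)) (.of_forall hθ)

theorem stmt8 {k : ℕ} (hk : 2 ≤ k) {X Θ : Type*} [MeasurableSpace X] [MeasurableSpace Θ]
    (μ : Measure X) [IsProbabilityMeasure μ]
    (ν : Measure Θ) [IsProbabilityMeasure ν]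
    (Ghat : Θ → X → Fin k → ℝ) (Gw Gstar : X → Fin k → ℝ)
    (hGhat : Measurable (Function.uncurry Ghat))
    (hGw : Measurable Gw) (hGstar : Measurable Gstar)
    (hGhatP : ∀ θ x, IsProbVec (Ghat θ x)) (hGwP : ∀ x, IsProbVec (Gw x))
    (hGstarP : ∀ x, IsProbVec (Gstar x))
    (f : ℝ → ℝ) (hconv : ConvexOn ℝ Set.univ f)
    (hdiff : DifferentiableOn ℝ f (Set.Ioi (0 : ℝ))) (hf1 : f 1 = 0)
    (L : ℝ) (hL : 0 ≤ L)
    (hL' : ∀ (θ : Θ) (x : X) (i : Fin k) (t : ℝ),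
      t ∈ Set.uIcc (Ghat θ x i / Gstar x i) (Gw x i / Gstar x i) → |deriv f t| ≤ L)
    (C : ℝ) (hC : 0 ≤ C)
    (hTV : ∀ θ x, tvDist (Ghat θ x) (Gw x) ≤ C * Real.sqrt (fDiv f (Ghat θ x) (Gw x)))
    (hint1 : ∀ θ, Integrable (fun x => fDiv f (Ghat θ x) (Gstar x)) μ)
    (hint2 : Integrable (fun x => fDiv f (Gw x) (Gstar x)) μ)
    (hint3 : ∀ θ, Integrable (fun x => fDiv f (Ghat θ x) (Gw x)) μ)
    (hint4 : Integrable (fun θ => popDis μ f (Ghat θ) Gstar) ν)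
    (hint5 : Integrable (fun θ => popDis μ f (Ghat θ) Gw) ν) :
    |∫ θ, (popDis μ f (Ghat θ) Gstar - popDis μ f Gw Gstar) ∂ν| ≤
      2 * L * C * Real.sqrt (∫ θ, popDis μ f (Ghat θ) Gw ∂ν) :=
  stmt8_general μ ν Ghat Gw Gstar hGhatP hGwP hGstarP f hconv hdiff hf1 L hL hL' C hC hTV hint1
    hint2 hint3 hint5
end

section
/- Let (Θ, Q) be a probability space, let f₁, f₂ : (0,∞) → ℝ be strictly convex and differentiable, α > 0, c, c' ∈ ℝ, and L : Θ → ℝ measurable. Suppose g̃ : Θ → (0,∞) is measurable with ∫ g̃ ∂Q = 1, f₁'(g̃(θ)) = −α * L(θ) − c for Q-almost every θ, and all compositions f₁ ∘ g̃, f₂ ∘ g̃, L * g̃ are Q-integrable. Define v : ℝ → ℝ by v(x) = −(1/α) * f₂'((f₁')⁻¹(−α * x − c)) − c'/α on the set where −α x − c is in the range of f₁'. Then f₂'(g̃(θ)) = −α * v(L(θ)) − c' Q-almost everywhere, and consequently g̃ is simultaneously the Q-a.e. unique minimizer of ∫ f₁(g) ∂Q + α ∫ L * g ∂Q and of ∫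 f₂(g) ∂Q + α ∫ v(L) * g ∂Q over all measurable g : Θ → (0,∞) with ∫ g ∂Q = 1 satisfying the corresponding integrability conditions. -/
/-!
Strict convexity gives the tangent-line inequality `f x + f' x * (y - x) < f y` for `y ≠ x`.
If `f' (g̃ θ) = -α L θ - c`, then pointwise `g̃ θ` is the strict minimiser of
`y ↦ f y + α L θ y + c y`; integrating (the `c`-term contributes the same constant `c` for every
density) shows that `g̃` minimises the regularised objective, and equality of the objectives forces
equality of the integrands, hence `g = g̃` almost everywhere.
For `f₂`: `f₁'` is strictly increasing, so `(f₁')⁻¹ (-α L θ - c) = g̃ θ`, and the definition of `v`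
turns this into the stationarity condition `f₂' (g̃ θ) = -α v (L θ) - c'`, to which the same
argument applies.
-/

open MeasureTheory Set

namespace StrictConvexOn

variable {S : Set ℝ} {f : ℝ → ℝ} {x y : ℝ}

lemma add_deriv_mul_sub_lt (hf : StrictConvexOn ℝ S f) (hx : x ∈ S) (hy : y ∈ S) (hxy : x ≠ y)
    (hfx : DifferentiableAt ℝ f x) : f x + deriv f x * (y - x) < f y := by
  rcases hxy.lt_or_gt with h | h
  · have hslope := hf.deriv_lt_slope hx hy h hfx
    rw [slope_def_field, lt_div_iff₀ (sub_pos.2 h)] at hslope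
    linarith
  · have hslope := hf.slope_lt_deriv hy hx h hfx
    rw [slope_def_field, div_lt_iff₀ (sub_pos.2 h)] at hslope
    linarith

lemma invFunOn_deriv_apply_deriv (hf : StrictConvexOn ℝ S f)
    (hfd : ∀ x ∈ S, DifferentiableAt ℝ f x) (hx : x ∈ S) :
    Function.invFunOn (deriv f) S (deriv f x) = x :=
  (hf.strictMonoOn_deriv hfd).injOn.leftInvOn_invFunOn hx

end StrictConvexOn

section Regularized

variable {Θ : Type*} [MeasurableSpace Θ] {Q : Measure Θ}

lemma integral_le_and_ae_eq_of_ae_lt {φ : Θ → ℝ → ℝ} {g gt : Θ → ℝ}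
    (hgt : Integrable (fun θ => φ θ (gt θ)) Q) (hg : Integrable (fun θ => φ θ (g θ)) Q)
    (hmin : ∀ᵐ θ ∂Q, g θ ≠ gt θ → φ θ (gt θ) < φ θ (g θ)) :
    ∫ θ, φ θ (gt θ) ∂Q ≤ ∫ θ, φ θ (g θ) ∂Q ∧
      (∫ θ, φ θ (g θ) ∂Q = ∫ θ, φ θ (gt θ) ∂Q → g =ᵐ[Q] gt) := by
  have hle : (fun θ => φ θ (gt θ)) ≤ᵐ[Q] fun θ => φ θ (g θ) := by
    filter_upwards [hmin] with θ hθ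
    by_cases heq : g θ = gt θ
    · rw [heq]
    · exact (hθ heq).le
  refine ⟨integral_mono_ae hgt hg hle, fun heq => ?_⟩
  filter_upwards [(integral_eq_iff_of_ae_le hgt hg hle).1 heq.symm, hmin] with θ hφ hθ
  by_contra hne
  exact (hθ hne).ne hφ

lemma integral_add_mul_add_mul_of_integral_eq_one {F R g : Θ → ℝ} (hF : Integrable F Q)
    (hR : Integrable (fun θ => R θ * g θ) Q) (hg : ∫ θ, g θ ∂Q = 1) (α c : ℝ) :
    Integrable (fun θ => F θ + α * (R θ * g θ) + c * g θ) Q ∧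
      ∫ θ, F θ + α * (R θ * g θ) + c * g θ ∂Q = ∫ θ, F θ ∂Q + α * ∫ θ, R θ * g θ ∂Q + c := by
  have hcg : Integrable (fun θ => c * g θ) Q := (integrable_of_integral_eq_one hg).const_mul c
  have hFR : Integrable (fun θ => F θ + α * (R θ * g θ)) Q := hF.add (hR.const_mul α)
  refine ⟨hFR.add hcg, ?_⟩
  rw [integral_add hFR hcg, integral_add hF (hR.const_mul α),
    integral_const_mul, integral_const_mul, hg, mul_one]

theorem StrictConvexOn.regularized_le_and_ae_eq_of_deriv_eq {S : Set ℝ} {f : ℝ → ℝ}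
    (hf : StrictConvexOn ℝ S f) {α c : ℝ} {R gt : Θ → ℝ} (hgtS : ∀ θ, gt θ ∈ S)
    (hfd : ∀ θ, DifferentiableAt ℝ f (gt θ)) (hgtnorm : ∫ θ, gt θ ∂Q = 1)
    (hstat : ∀ᵐ θ ∂Q, deriv f (gt θ) = -α * R θ - c)
    (hfgt : Integrable (fun θ => f (gt θ)) Q) (hRgt : Integrable (fun θ => R θ * gt θ) Q)
    {g : Θ → ℝ} (hgS : ∀ θ, g θ ∈ S) (hgnorm : ∫ θ, g θ ∂Q = 1)
    (hfg : Integrable (fun θ => f (g θ)) Q) (hRg : Integrable (fun θ => R θ * g θ) Q) :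
    (∫ θ, f (gt θ) ∂Q + α * ∫ θ, R θ * gt θ ∂Q ≤ ∫ θ, f (g θ) ∂Q + α * ∫ θ, R θ * g θ ∂Q) ∧
      (∫ θ, f (g θ) ∂Q + α * ∫ θ, R θ * g θ ∂Q = ∫ θ, f (gt θ) ∂Q + α * ∫ θ, R θ * gt θ ∂Q →
        g =ᵐ[Q] gt) := by
  obtain ⟨hφgt, hJgt⟩ := integral_add_mul_add_mul_of_integral_eq_one hfgt hRgt hgtnorm α c
  obtain ⟨hφg, hJg⟩ := integral_add_mul_add_mul_of_integral_eq_one hfg hRg hgnorm α c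
  have hmin : ∀ᵐ θ ∂Q, g θ ≠ gt θ →
      f (gt θ) + α * (R θ * gt θ) + c * gt θ < f (g θ) + α * (R θ * g θ) + c * g θ := by
    filter_upwards [hstat] with θ hθ hne
    have htangent := hf.add_deriv_mul_sub_lt (hgtS θ) (hgS θ) (Ne.symm hne) (hfd θ)
    rw [hθ] at htangent
    linarith
  obtain ⟨hle, huniq⟩ := integral_le_and_ae_eq_of_ae_lt
    (φ := fun θ y => f y + α * (R θ * y) + c * y) hφgt hφg hmin
  rw [hJgt, hJg] at hle huniq
  exact ⟨by linarith, fun heq => huniq (by linarith)⟩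

end Regularized

theorem stmt13_general {Θ : Type*} [MeasurableSpace Θ] (Q : Measure Θ)
    (f₁ f₂ : ℝ → ℝ)
    (hconv₁ : StrictConvexOn ℝ (Set.Ioi (0 : ℝ)) f₁)
    (hdiff₁ : DifferentiableOn ℝ f₁ (Set.Ioi (0 : ℝ)))
    (hconv₂ : StrictConvexOn ℝ (Set.Ioi (0 : ℝ)) f₂)
    (hdiff₂ : DifferentiableOn ℝ f₂ (Set.Ioi (0 : ℝ)))
    (α : ℝ) (hα : 0 < α) (c c' : ℝ)
    (L : Θ → ℝ)
    (gt : Θ → ℝ) (hgtpos : ∀ θ, 0 < gt θ)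
    (hgtnorm : ∫ θ, gt θ ∂Q = 1)
    (hstat : ∀ᵐ θ ∂Q, deriv f₁ (gt θ) = -α * L θ - c)
    (hint1 : Integrable (fun θ => f₁ (gt θ)) Q)
    (hint2 : Integrable (fun θ => f₂ (gt θ)) Q)
    (hint3 : Integrable (fun θ => L θ * gt θ) Q)
    -- the transformation function `v(x) = −(1/α) f₂'((f₁')⁻¹(−αx − c)) − c'/α`
    (v : ℝ → ℝ)
    (hv : ∀ x : ℝ, (-α * x - c) ∈ deriv f₁ '' Set.Ioi (0 : ℝ) →
      v x = -(1 / α) *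
          deriv f₂ (Function.invFunOn (deriv f₁) (Set.Ioi (0 : ℝ)) (-α * x - c)) - c' / α)
    (hint4 : Integrable (fun θ => v (L θ) * gt θ) Q) :
    -- `g̃` satisfies the stationarity condition for `f₂` with regularizer `v ∘ L`
    (∀ᵐ θ ∂Q, deriv f₂ (gt θ) = -α * v (L θ) - c') ∧
    -- `g̃` is the Q-a.e. unique minimizer of the `f₁`-objective with regularizer `L`
    (∀ g : Θ → ℝ, Measurable g → (∀ θ, 0 < g θ) → (∫ θ, g θ ∂Q = 1) →
      Integrable (fun θ => f₁ (g θ)) Q → Integrable (fun θ => L θ * g θ) Q →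
      (∫ θ, (f₁ (gt θ)) ∂Q + α * ∫ θ, L θ * gt θ ∂Q ≤
        ∫ θ, (f₁ (g θ)) ∂Q + α * ∫ θ, L θ * g θ ∂Q) ∧
      ((∫ θ, (f₁ (g θ)) ∂Q + α * ∫ θ, L θ * g θ ∂Q =
        ∫ θ, (f₁ (gt θ)) ∂Q + α * ∫ θ, L θ * gt θ ∂Q) → g =ᵐ[Q] gt)) ∧
    -- `g̃` is the Q-a.e. unique minimizer of the `f₂`-objective with regularizer `v ∘ L`
    (∀ g : Θ → ℝ, Measurable g → (∀ θ, 0 < g θ) → (∫ θ, g θ ∂Q = 1) →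
      Integrable (fun θ => f₂ (g θ)) Q → Integrable (fun θ => v (L θ) * g θ) Q →
      (∫ θ, (f₂ (gt θ)) ∂Q + α * ∫ θ, v (L θ) * gt θ ∂Q ≤
        ∫ θ, (f₂ (g θ)) ∂Q + α * ∫ θ, v (L θ) * g θ ∂Q) ∧
      ((∫ θ, (f₂ (g θ)) ∂Q + α * ∫ θ, v (L θ) * g θ ∂Q =
        ∫ θ, (f₂ (gt θ)) ∂Q + α * ∫ θ, v (L θ) * gt θ ∂Q) → g =ᵐ[Q] gt)) := by
  have hd₁ : ∀ x ∈ Ioi (0 : ℝ), DifferentiableAt ℝ f₁ x :=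
    fun x hx => hdiff₁.differentiableAt (Ioi_mem_nhds hx)
  have hd₂ : ∀ θ, DifferentiableAt ℝ f₂ (gt θ) :=
    fun θ => hdiff₂.differentiableAt (Ioi_mem_nhds (hgtpos θ))
  have hstat₂ : ∀ᵐ θ ∂Q, deriv f₂ (gt θ) = -α * v (L θ) - c' := by
    filter_upwards [hstat] with θ hθ
    rw [hv (L θ) ⟨gt θ, hgtpos θ, hθ⟩, ← hθ, hconv₁.invFunOn_deriv_apply_deriv hd₁ (hgtpos θ)]
    field_simp
    ring
  refine ⟨hstat₂, fun g _ hgpos hgnorm hfg hLg => ?_, fun g _ hgpos hgnorm hfg hvg => ?_⟩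
  · exact hconv₁.regularized_le_and_ae_eq_of_deriv_eq hgtpos (fun θ => hd₁ _ (hgtpos θ))
      hgtnorm hstat hint1 hint3 hgpos hgnorm hfg hLg
  · exact hconv₂.regularized_le_and_ae_eq_of_deriv_eq hgtpos hd₂ hgtnorm hstat₂ hint2 hint4
      hgpos hgnorm hfg hvg

theorem stmt13 {Θ : Type*} [MeasurableSpace Θ] (Q : Measure Θ) [IsProbabilityMeasure Q]
    (f₁ f₂ : ℝ → ℝ)
    (hconv₁ : StrictConvexOn ℝ (Set.Ioi (0 : ℝ)) f₁)
    (hdiff₁ : DifferentiableOn ℝ f₁ (Set.Ioi (0 : ℝ)))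
    (hconv₂ : StrictConvexOn ℝ (Set.Ioi (0 : ℝ)) f₂)
    (hdiff₂ : DifferentiableOn ℝ f₂ (Set.Ioi (0 : ℝ)))
    (α : ℝ) (hα : 0 < α) (c c' : ℝ)
    (L : Θ → ℝ) (hL : Measurable L)
    (gt : Θ → ℝ) (hgt : Measurable gt) (hgtpos : ∀ θ, 0 < gt θ)
    (hgtnorm : ∫ θ, gt θ ∂Q = 1)
    (hstat : ∀ᵐ θ ∂Q, deriv f₁ (gt θ) = -α * L θ - c)
    (hint1 : Integrable (fun θ => f₁ (gt θ)) Q)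
    (hint2 : Integrable (fun θ => f₂ (gt θ)) Q)
    (hint3 : Integrable (fun θ => L θ * gt θ) Q)
    -- the transformation function `v(x) = −(1/α) f₂'((f₁')⁻¹(−αx − c)) − c'/α`
    (v : ℝ → ℝ)
    (hv : ∀ x : ℝ, (-α * x - c) ∈ deriv f₁ '' Set.Ioi (0 : ℝ) →
      v x = -(1 / α) *
          deriv f₂ (Function.invFunOn (deriv f₁) (Set.Ioi (0 : ℝ)) (-α * x - c)) - c' / α)
    (hint4 : Integrable (fun θ => v (L θ) * gt θ) Q) :
    -- `g̃` satisfies the stationarity condition for `f₂` with regularizer `v ∘ L`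
    (∀ᵐ θ ∂Q, deriv f₂ (gt θ) = -α * v (L θ) - c') ∧
    -- `g̃` is the Q-a.e. unique minimizer of the `f₁`-objective with regularizer `L`
    (∀ g : Θ → ℝ, Measurable g → (∀ θ, 0 < g θ) → (∫ θ, g θ ∂Q = 1) →
      Integrable (fun θ => f₁ (g θ)) Q → Integrable (fun θ => L θ * g θ) Q →
      (∫ θ, (f₁ (gt θ)) ∂Q + α * ∫ θ, L θ * gt θ ∂Q ≤
        ∫ θ, (f₁ (g θ)) ∂Q + α * ∫ θ, L θ * g θ ∂Q) ∧
      ((∫ θ, (f₁ (g θ)) ∂Q + α * ∫ θ, L θ * g θ ∂Q =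
        ∫ θ, (f₁ (gt θ)) ∂Q + α * ∫ θ, L θ * gt θ ∂Q) → g =ᵐ[Q] gt)) ∧
    -- `g̃` is the Q-a.e. unique minimizer of the `f₂`-objective with regularizer `v ∘ L`
    (∀ g : Θ → ℝ, Measurable g → (∀ θ, 0 < g θ) → (∫ θ, g θ ∂Q = 1) →
      Integrable (fun θ => f₂ (g θ)) Q → Integrable (fun θ => v (L θ) * g θ) Q →
      (∫ θ, (f₂ (gt θ)) ∂Q + α * ∫ θ, v (L θ) * gt θ ∂Q ≤
        ∫ θ, (f₂ (g θ)) ∂Q + α * ∫ θ, v (L θ) * g θ ∂Q) ∧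
      ((∫ θ, (f₂ (g θ)) ∂Q + α * ∫ θ, v (L θ) * g θ ∂Q =
        ∫ θ, (f₂ (gt θ)) ∂Q + α * ∫ θ, v (L θ) * gt θ ∂Q) → g =ᵐ[Q] gt)) :=
  stmt13_general Q f₁ f₂ hconv₁ hdiff₁ hconv₂ hdiff₂ α hα c c' L gt hgtpos hgtnorm hstat hint1 hint2
    hint3 v hv hint4
end
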